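/- arXiv:1208.5007 — 4 statements merged into one kernel-verified Lean document; each statement's English description precedes it below -/
import Mathlib

section
/- A nonzero rational number q is a square in ℚ if and only if q is a square in ℝ and, for every prime p, the image of q in ℚ_[p] is a square in ℚ_[p]. -/
/-!
A real square is nonnegative and a `p`-adic square has even valuation. Conversely, if `q ≥ 0` has
even `p`-adic valuation for every `p`, then the natural number `q.num * q.den = q * q.den ^ 2` has
even exponents in its prime factorization, so it is a square, and hence so is `q`.
-/

theorem Nat.isSquare_of_forall_even_factorization {n : ℕ} (h : ∀ p, Even (n.factorization p)) :
    IsSquare n := by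
  rcases eq_or_ne n 0 with rfl | hn
  · exact IsSquare.zero
  refine ⟨n.factorization.prod fun p k => p ^ (k / 2), ?_⟩
  conv_lhs => rw [← Nat.prod_factorization_pow_eq_self hn]
  rw [Finsupp.prod, Finsupp.prod, ← Finset.prod_mul_distrib]
  refine Finset.prod_congr rfl fun p _ => ?_
  rw [← pow_add, ← two_mul, Nat.two_mul_div_two_of_even (h p)]

theorem Padic.even_valuation_of_isSquare {p : ℕ} [Fact p.Prime] {x : ℚ_[p]} (hx : IsSquare x) :
    Even x.valuation := by
  obtain ⟨r, rfl⟩ := hx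
  rw [← sq, Padic.valuation_pow, Nat.cast_ofNat]
  exact even_two_mul _

theorem Rat.isSquare_of_nonneg_of_forall_even_padicValRat {q : ℚ} (hq : 0 ≤ q)
    (h : ∀ p, p.Prime → Even (padicValRat p q)) : IsSquare q := by
  rcases hq.eq_or_lt with rfl | hq
  · exact IsSquare.zero
  set m := q.num.natAbs * q.den with hm
  have hmq : (m : ℚ) = q * q.den ^ 2 := by
    rw [hm, Nat.cast_mul, Nat.cast_natAbs, abs_of_pos (Rat.num_pos.mpr hq), sq, ← mul_assoc,
      Rat.mul_den_eq_num]
  obtain ⟨a, ha⟩ : IsSquare m := by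
    refine Nat.isSquare_of_forall_even_factorization fun p => ?_
    by_cases hp : p.Prime
    · have := Fact.mk hp
      rw [Nat.factorization_def _ hp, ← Int.even_coe_nat, padicValRat_of_nat, hmq,
        padicValRat.mul hq.ne' (by positivity), padicValRat.pow, Nat.cast_ofNat]
      exact (h p hp).add (even_two_mul _)
    · simp [Nat.factorization_eq_zero_of_not_prime _ hp]
  refine ⟨a / q.den, ?_⟩
  rw [div_mul_div_comm, ← Nat.cast_mul, ← ha, hmq, sq]
  field_simp

theorem rat_isSquare_iff_real_and_padic_general (q : ℚ) :
    IsSquare q ↔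
      IsSquare (q : ℝ) ∧ ∀ (p : ℕ) [Fact p.Prime], IsSquare (q : ℚ_[p]) := by
  refine ⟨fun hq => ⟨hq.map (Rat.castHom ℝ), fun p _ => hq.map (Rat.castHom ℚ_[p])⟩, ?_⟩
  rintro ⟨hreal, hpadic⟩
  refine Rat.isSquare_of_nonneg_of_forall_even_padicValRat (by exact_mod_cast hreal.nonneg)
    fun p hp => ?_
  have := Fact.mk hp
  rw [← Padic.valuation_ratCast]
  exact Padic.even_valuation_of_isSquare (hpadic p)

/-- A nonzero rational is a square iff it is a square in `ℝ` and in every `ℚ_[p]`. -/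
theorem rat_isSquare_iff_real_and_padic (q : ℚ) (hq : q ≠ 0) :
    IsSquare q ↔
      IsSquare (q : ℝ) ∧ ∀ (p : ℕ) [Fact p.Prime], IsSquare (q : ℚ_[p]) :=
  rat_isSquare_iff_real_and_padic_general q
end

section
/- Let a and b be nonzero rational numbers. If the equation z² = a·x² + b·y² has a nontrivial solution over ℝ and has a nontrivial solution over ℚ_[p] for every prime p, then it has a nontrivial rational solution (x,y,z) ∈ ℚ³ with (x,y,z) ≠ (0,0,0). -/
/-!
Legendre's descent. Scaling by squares reduces to squarefree integers `a, b` with `|a| ≤ |b|`.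
For a prime `p ∣ b` with `p ∤ a`, a `p`-adic solution forces `a` to be a square mod `p`, because
`b` has odd `p`-adic valuation; by the Chinese remainder theorem `a ≡ t² mod b` with
`|t| ≤ |b| / 2`. Then `t² - a = b b' c²` with `b'` squarefree and `|b'| < |b|`, and since `t² - a`
is a norm from `K(√a)`, the equation for `(a, b)` is solvable over a field `K` exactly when the one
for `(a, b')` is. The descent stops at `|b| = 1`, where only `a = b = -1` fails, and that case is
excluded by the real solution.
-/

def TernarySolvable (K : Type*) [Field K] (a b : K) : Prop :=
  ∃ x y z : K, (x, y, z) ≠ (0, 0, 0) ∧ z ^ 2 = a * x ^ 2 + b * y ^ 2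

namespace TernarySolvable

variable {K : Type*} [Field K] {a b : K}

theorem symm (h : TernarySolvable K a b) : TernarySolvable K b a := by
  obtain ⟨x, y, z, hne, h⟩ := h
  exact ⟨y, x, z, by simpa [and_comm, and_left_comm] using hne, by rw [h]; ring⟩

theorem comm : TernarySolvable K a b ↔ TernarySolvable K b a :=
  ⟨symm, symm⟩

theorem of_isSquare_left (ha : IsSquare a) : TernarySolvable K a b := by
  obtain ⟨s, rfl⟩ := ha
  exact ⟨1, 0, s, by simp, by ring⟩

theorem iff_isSquare_or_exists_eq_sq_sub :
    TernarySolvable K a b ↔ IsSquare a ∨ ∃ u v, b = u ^ 2 - a * v ^ 2 := by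
  constructor
  · rintro ⟨x, y, z, hne, h⟩
    by_cases hy : y = 0
    · subst hy
      have hx : x ≠ 0 := by
        rintro rfl
        exact hne (by simpa using h)
      exact Or.inl ⟨z / x, by field_simp; linear_combination -h⟩
    · exact Or.inr ⟨z / y, x / y, by field_simp; linear_combination -h⟩
  · rintro (ha | ⟨u, v, rfl⟩)
    · exact of_isSquare_left ha
    · exact ⟨v, 1, u, by simp, by ring⟩

theorem of_sub_sq_eq {b' c t : K} (hb : b ≠ 0) (hc : c ≠ 0)
    (h : t ^ 2 - a = b * b' * c ^ 2) (hs : TernarySolvable K a b) : TernarySolvable K a b' := by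
  rcases iff_isSquare_or_exists_eq_sq_sub.mp hs with ha | ⟨u, v, huv⟩
  · exact of_isSquare_left ha
  -- `(t² - a)(u² - a v²) = (t u + a v)² - a (t v + u)²`
  refine iff_isSquare_or_exists_eq_sq_sub.mpr
    (Or.inr ⟨(t * u + a * v) / (b * c), (t * v + u) / (b * c), ?_⟩)
  field_simp
  linear_combination (-b) * h + (t ^ 2 - a) * huv

theorem of_mul_sq_right {s : K} (hs : s ≠ 0) (h : TernarySolvable K a (b * s ^ 2)) :
    TernarySolvable K a b := by
  obtain ⟨x, y, z, hne, h⟩ := h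
  exact ⟨x, s * y, z, by simpa [hs] using hne, by rw [h]; ring⟩

theorem mul_sq_right_iff {s : K} (hs : s ≠ 0) :
    TernarySolvable K a (b * s ^ 2) ↔ TernarySolvable K a b := by
  refine ⟨of_mul_sq_right hs, fun h => of_mul_sq_right (inv_ne_zero hs) ?_⟩
  rwa [mul_assoc, ← mul_pow, mul_inv_cancel₀ hs, one_pow, mul_one]

theorem mul_sq_iff {s r : K} (hs : s ≠ 0) (hr : r ≠ 0) :
    TernarySolvable K (a * s ^ 2) (b * r ^ 2) ↔ TernarySolvable K a b := by
  rw [mul_sq_right_iff hr, comm, mul_sq_right_iff hs, comm]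

theorem not_of_neg [LinearOrder K] [IsStrictOrderedRing K] (ha : a < 0) (hb : b < 0) :
    ¬TernarySolvable K a b := by
  rintro ⟨x, y, z, hne, h⟩
  have hax : a * x ^ 2 ≤ 0 := mul_nonpos_of_nonpos_of_nonneg ha.le (sq_nonneg x)
  have hby : b * y ^ 2 ≤ 0 := mul_nonpos_of_nonpos_of_nonneg hb.le (sq_nonneg y)
  have hx : x = 0 := by
    simpa [ha.ne] using (by linarith [sq_nonneg z] : a * x ^ 2 = 0)
  have hy : y = 0 := by
    simpa [hb.ne] using (by linarith [sq_nonneg z] : b * y ^ 2 = 0)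
  subst hx hy
  exact hne (by simpa using h)

end TernarySolvable

namespace Padic

variable {p : ℕ} [hp : Fact p.Prime]

theorem norm_sq_ne_inv_mul_norm_sq {u w : ℚ_[p]} (hw : w ≠ 0) :
    ‖u‖ ^ 2 ≠ (p : ℝ)⁻¹ * ‖w‖ ^ 2 := by
  have hp0 : (0 : ℝ) < p := by exact_mod_cast hp.out.pos
  rcases eq_or_ne u 0 with rfl | hu
  · simp [hw, hp.out.ne_zero]
  intro h
  rw [norm_eq_zpow_neg_valuation hu, norm_eq_zpow_neg_valuation hw, ← zpow_neg_one,
    ← zpow_natCast, ← zpow_natCast, ← zpow_mul, ← zpow_mul, ← zpow_add₀ hp0.ne'] at h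
  have := zpow_right_injective₀ hp0 (by exact_mod_cast hp.out.one_lt.ne') h
  omega

theorem norm_intCast_eq_inv_of_squarefree {b : ℤ} (hb : Squarefree b) (hpb : (p : ℤ) ∣ b) :
    ‖(b : ℚ_[p])‖ = (p : ℝ)⁻¹ := by
  obtain ⟨c, rfl⟩ := hpb
  have hpc : ¬(p : ℤ) ∣ c := fun hc =>
    (Nat.prime_iff_prime_int.mp hp.out).not_isUnit (hb p (mul_dvd_mul_left _ hc))
  have hc : ‖(c : ℚ_[p])‖ = 1 :=
    le_antisymm (norm_int_le_one c) (not_lt.mp (mt norm_intCast_lt_one_iff.mp hpc))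
  push_cast
  rw [norm_mul, norm_p, hc, mul_one]

theorem isSquare_zmod_of_norm_sub_sq_lt_one {a : ℤ} {u : ℚ_[p]} (hu : ‖u‖ ≤ 1)
    (h : ‖(a : ℚ_[p]) - u ^ 2‖ < 1) : IsSquare (a : ZMod p) := by
  set U : ℤ_[p] := ⟨u, hu⟩
  have hker : (a : ℤ_[p]) - U ^ 2 ∈ RingHom.ker PadicInt.toZMod := by
    rw [PadicInt.ker_toZMod, IsLocalRing.mem_maximalIdeal, PadicInt.mem_nonunits]
    exact h
  rw [RingHom.mem_ker, map_sub, map_pow, map_intCast, sub_eq_zero] at hker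
  exact ⟨PadicInt.toZMod U, by rw [hker, sq]⟩

theorem isSquare_zmod_of_ternarySolvable {a : ℤ} {b : ℚ_[p]} (hpa : ¬(p : ℤ) ∣ a)
    (hb : ‖b‖ = (p : ℝ)⁻¹) (h : TernarySolvable ℚ_[p] a b) : IsSquare (a : ZMod p) := by
  obtain ⟨x, y, z, hne, h⟩ := h
  have ha : ‖(a : ℚ_[p])‖ = 1 :=
    le_antisymm (norm_int_le_one a) (not_lt.mp (mt norm_intCast_lt_one_iff.mp hpa))
  have hx : x ≠ 0 := by
    rintro rfl
    have hy : y ≠ 0 := by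
      rintro rfl
      exact hne (by simpa using h)
    refine norm_sq_ne_inv_mul_norm_sq (u := z) hy ?_
    rw [← hb, ← norm_pow, ← norm_pow, ← norm_mul, h]
    ring_nf
  set u := z / x
  set w := y / x
  have hu : u ^ 2 = a + b * w ^ 2 := by
    simp only [u, w]
    field_simp
    linear_combination h
  -- `b w²` has odd valuation: it cannot have norm `‖a‖ = 1`, nor a larger one (that of `u²`).
  have hbw : ‖b * w ^ 2‖ < 1 := by
    have hnorm : ‖b * w ^ 2‖ = (p : ℝ)⁻¹ * ‖w‖ ^ 2 := by rw [norm_mul, norm_pow, hb]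
    rcases eq_or_ne w 0 with hw | hw
    · simp [hw]
    rcases lt_trichotomy ‖b * w ^ 2‖ 1 with hlt | heq | hgt
    · exact hlt
    · exact absurd (by rw [← hnorm, heq, norm_one, one_pow])
        (norm_sq_ne_inv_mul_norm_sq (u := 1) hw)
    · refine absurd ?_ (norm_sq_ne_inv_mul_norm_sq (u := u) hw)
      rw [← hnorm, ← norm_pow, hu, add_eq_max_of_ne (ha ▸ hgt.ne), ha, max_eq_right hgt.le]
  refine isSquare_zmod_of_norm_sub_sq_lt_one (u := u) ?_ ?_
  · have : ‖u‖ ^ 2 ≤ 1 := by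
      rw [← norm_pow, hu]
      exact (nonarchimedean _ _).trans (max_le ha.le hbw.le)
    exact (pow_le_one_iff_of_nonneg (norm_nonneg u) two_ne_zero).mp this
  · rwa [hu, sub_add_cancel_left, norm_neg]

end Padic

theorem ZMod.isSquare_intCast_mul {m n : ℕ} (hmn : m.Coprime n) {a : ℤ}
    (hm : IsSquare (a : ZMod m)) (hn : IsSquare (a : ZMod n)) : IsSquare (a : ZMod (m * n)) := by
  obtain ⟨x, hx⟩ := hm
  obtain ⟨y, hy⟩ := hn
  have : IsSquare (a : ZMod m × ZMod n) := ⟨(x, y), Prod.ext hx hy⟩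
  simpa only [map_intCast] using this.map (ZMod.chineseRemainder hmn).symm

theorem ZMod.isSquare_intCast_of_squarefree {n : ℕ} (hn : Squarefree n) {a : ℤ}
    (h : ∀ q : ℕ, q.Prime → q ∣ n → IsSquare (a : ZMod q)) : IsSquare (a : ZMod n) := by
  induction n using induction_on_primes with
  | zero => exact absurd rfl hn.ne_zero
  | one => exact ⟨0, Subsingleton.elim _ _⟩
  | prime_mul q n hq ih =>
    have hqn : q.Coprime n := (Nat.Prime.coprime_iff_not_dvd hq).mpr fun hdvd =>
      hq.not_isUnit (hn q (mul_dvd_mul_left q hdvd))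
    exact isSquare_intCast_mul hqn (h q hq (dvd_mul_right q n))
      (ih hn.of_mul_right fun r hr hrn => h r hr (dvd_mul_of_dvd_right hrn q))

theorem ZMod.exists_dvd_sq_sub_of_isSquare {n : ℕ} [NeZero n] {a : ℤ}
    (h : IsSquare (a : ZMod n)) : ∃ t : ℤ, 2 * t.natAbs ≤ n ∧ (n : ℤ) ∣ t ^ 2 - a := by
  obtain ⟨r, hr⟩ := h
  refine ⟨r.valMinAbs, ?_, ?_⟩
  · have := natAbs_valMinAbs_le r
    omega
  · rw [← ZMod.intCast_zmod_eq_zero_iff_dvd]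
    push_cast
    rw [hr, sq, sub_self]

theorem Int.exists_squarefree_mul_sq (m : ℤ) : ∃ b c : ℤ, Squarefree b ∧ m = b * c ^ 2 := by
  obtain ⟨b, c, hbc, hb⟩ := Nat.sq_mul_squarefree m.natAbs
  rcases Int.natAbs_eq m with hm | hm
  · refine ⟨b, c, Int.squarefree_natCast.mpr hb, ?_⟩
    rw [hm, ← hbc]
    push_cast
    ring
  · refine ⟨-b, c, Int.squarefree_natAbs.mp (by simpa using hb), ?_⟩
    rw [hm, ← hbc]
    push_cast
    ring

theorem Rat.exists_squarefree_mul_sq {q : ℚ} (hq : q ≠ 0) :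
    ∃ (n : ℤ) (s : ℚ), Squarefree n ∧ s ≠ 0 ∧ q = n * s ^ 2 := by
  obtain ⟨n, c, hn, hnc⟩ := Int.exists_squarefree_mul_sq (q.num * q.den)
  have hnc : (q.num : ℚ) * q.den = n * c ^ 2 := by exact_mod_cast hnc
  have hqn : q = n * (c / q.den) ^ 2 := by
    rw [div_pow, mul_div_assoc', eq_div_iff (by positivity)]
    linear_combination (q.den : ℚ) * Rat.mul_den_eq_num q + hnc
  exact ⟨n, c / q.den, hn, fun hs => hq (by rw [hqn, hs]; ring), hqn⟩

theorem exists_squarefree_natAbs_lt_of_dvd_sq_sub {a b t : ℤ} (hab : a.natAbs ≤ b.natAbs)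
    (hb : 2 ≤ b.natAbs) (ht : 2 * t.natAbs ≤ b.natAbs) (hdvd : b ∣ t ^ 2 - a) (hta : t ^ 2 ≠ a) :
    ∃ b' c : ℤ, Squarefree b' ∧ c ≠ 0 ∧ b'.natAbs < b.natAbs ∧ t ^ 2 - a = b * b' * c ^ 2 := by
  obtain ⟨m, hm⟩ := hdvd
  obtain ⟨b', c, hb', rfl⟩ := Int.exists_squarefree_mul_sq m
  have hc : c ≠ 0 := by
    rintro rfl
    exact hta (by linear_combination hm)
  refine ⟨b', c, hb', hc, ?_, by rw [hm]; ring⟩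
  have hbound : b.natAbs * b'.natAbs ≤ t.natAbs ^ 2 + a.natAbs :=
    calc b.natAbs * b'.natAbs
        ≤ b.natAbs * (b'.natAbs * c.natAbs ^ 2) :=
          Nat.mul_le_mul_left _ (Nat.le_mul_of_pos_right _ (by positivity))
      _ = (t ^ 2 - a).natAbs := by rw [hm, Int.natAbs_mul, Int.natAbs_mul, Int.natAbs_pow]
      _ ≤ (t ^ 2).natAbs + a.natAbs := Int.natAbs_sub_le _ _
      _ = t.natAbs ^ 2 + a.natAbs := by rw [Int.natAbs_pow]
  -- Legendre's bound `|b| |b'| ≤ t² + |a| ≤ b² / 4 + |b| < b²`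
  by_contra! hle
  nlinarith [Nat.mul_le_mul ht ht, Nat.mul_le_mul_left b.natAbs hle]

theorem exists_dvd_sq_sub_of_ternarySolvable_padic {a b : ℤ} (hb : Squarefree b)
    (h : ∀ (p : ℕ) [Fact p.Prime], TernarySolvable ℚ_[p] a b) :
    ∃ t : ℤ, 2 * t.natAbs ≤ b.natAbs ∧ b ∣ t ^ 2 - a := by
  have hsq : IsSquare (a : ZMod b.natAbs) :=
    ZMod.isSquare_intCast_of_squarefree (Int.squarefree_natAbs.mpr hb) fun q hq hqb => by
      have : Fact q.Prime := ⟨hq⟩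
      by_cases hqa : (q : ℤ) ∣ a
      · rw [(ZMod.intCast_zmod_eq_zero_iff_dvd a q).mpr hqa]
        exact IsSquare.zero
      · exact Padic.isSquare_zmod_of_ternarySolvable hqa
          (Padic.norm_intCast_eq_inv_of_squarefree hb (Int.natCast_dvd.mpr hqb)) (h q)
  have : NeZero b.natAbs := ⟨Int.natAbs_ne_zero.mpr hb.ne_zero⟩
  obtain ⟨t, ht, hdvd⟩ := ZMod.exists_dvd_sq_sub_of_isSquare hsq
  exact ⟨t, ht, Int.natAbs_dvd.mp hdvd⟩

def LocallySolvable (a b : ℚ) : Prop :=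
  TernarySolvable ℝ a b ∧ ∀ (p : ℕ) [Fact p.Prime], TernarySolvable ℚ_[p] a b

namespace LocallySolvable

variable {a b : ℚ}

theorem symm (h : LocallySolvable a b) : LocallySolvable b a :=
  ⟨h.1.symm, fun p _ => (h.2 p).symm⟩

theorem of_sub_sq_eq {b' c t : ℚ} (hb : b ≠ 0) (hc : c ≠ 0) (hbc : t ^ 2 - a = b * b' * c ^ 2)
    (h : LocallySolvable a b) : LocallySolvable a b' := by
  have key (K : Type) [Field K] [CharZero K] (hK : TernarySolvable K a b) :
      TernarySolvable K a b' :=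
    hK.of_sub_sq_eq (t := t) (c := c) (by exact_mod_cast hb) (by exact_mod_cast hc)
      (by exact_mod_cast hbc)
  exact ⟨key ℝ h.1, fun p _ => key ℚ_[p] (h.2 p)⟩

theorem of_mul_sq {s r : ℚ} (hs : s ≠ 0) (hr : r ≠ 0)
    (h : LocallySolvable (a * s ^ 2) (b * r ^ 2)) : LocallySolvable a b := by
  have key (K : Type) [Field K] [CharZero K] (hK : TernarySolvable K ↑(a * s ^ 2) ↑(b * r ^ 2)) :
      TernarySolvable K a b := by
    push_cast at hK
    exact (TernarySolvable.mul_sq_iff (by exact_mod_cast hs) (by exact_mod_cast hr)).mp hK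
  exact ⟨key ℝ h.1, fun p _ => key ℚ_[p] (h.2 p)⟩

end LocallySolvable

namespace TernarySolvable

theorem rat_of_natAbs_eq_one {a b : ℤ} (ha : a.natAbs = 1) (hb : b.natAbs = 1)
    (h : TernarySolvable ℝ a b) : TernarySolvable ℚ a b := by
  rcases Int.natAbs_eq_iff.mp ha with rfl | rfl
  · exact of_isSquare_left ⟨1, by norm_num⟩
  rcases Int.natAbs_eq_iff.mp hb with rfl | rfl
  · exact (of_isSquare_left ⟨1, by norm_num⟩).symm
  · exact absurd h (not_of_neg (by norm_num) (by norm_num))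

theorem of_locallySolvable_of_squarefree {a b : ℤ} (ha : Squarefree a) (hb : Squarefree b)
    (h : LocallySolvable a b) : TernarySolvable ℚ a b := by
  induction hn : a.natAbs + b.natAbs using Nat.strong_induction_on generalizing a b with
  | _ n ih =>
  wlog hab : a.natAbs ≤ b.natAbs generalizing a b
  · exact (this hb ha h.symm (by omega) (by omega)).symm
  have ha1 : 1 ≤ a.natAbs := Int.natAbs_pos.mpr ha.ne_zero
  rcases (show b.natAbs = 1 ∨ 2 ≤ b.natAbs by omega) with hb1 | hb2
  · exact rat_of_natAbs_eq_one (by omega) hb1 (by simpa only [Rat.cast_intCast] using h.1)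
  obtain ⟨t, ht, hdvd⟩ := exists_dvd_sq_sub_of_ternarySolvable_padic hb fun p _ => by
    simpa only [Rat.cast_intCast] using h.2 p
  by_cases hta : t ^ 2 = a
  · exact of_isSquare_left ⟨t, by rw [← hta]; push_cast; ring⟩
  obtain ⟨b', c, hb', hc, hlt, htbc⟩ :=
    exists_squarefree_natAbs_lt_of_dvd_sq_sub hab hb2 ht hdvd hta
  have htbc : (t : ℚ) ^ 2 - a = b * b' * c ^ 2 := by exact_mod_cast htbc
  have hc : (c : ℚ) ≠ 0 := by exact_mod_cast hc
  have hab' : TernarySolvable ℚ a b' :=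
    ih _ (by omega) ha hb' (h.of_sub_sq_eq (by exact_mod_cast hb.ne_zero) hc htbc) rfl
  exact hab'.of_sub_sq_eq (t := t) (by exact_mod_cast hb'.ne_zero) hc
    (by linear_combination htbc)

end TernarySolvable

/-- Hasse–Minkowski for diagonal ternary quadratic forms over `ℚ`. -/
theorem hasse_minkowski_ternary (a b : ℚ) (ha : a ≠ 0) (hb : b ≠ 0)
    (hR : ∃ x y z : ℝ, (x, y, z) ≠ (0, 0, 0) ∧ z ^ 2 = (a : ℝ) * x ^ 2 + (b : ℝ) * y ^ 2)
    (hQp : ∀ (p : ℕ) [Fact p.Prime],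
      ∃ x y z : ℚ_[p], (x, y, z) ≠ (0, 0, 0) ∧ z ^ 2 = (a : ℚ_[p]) * x ^ 2 + (b : ℚ_[p]) * y ^ 2) :
    ∃ x y z : ℚ, (x, y, z) ≠ (0, 0, 0) ∧ z ^ 2 = a * x ^ 2 + b * y ^ 2 := by
  obtain ⟨m, s, hm, hs, rfl⟩ := Rat.exists_squarefree_mul_sq ha
  obtain ⟨n, r, hn, hr, rfl⟩ := Rat.exists_squarefree_mul_sq hb
  have hloc : LocallySolvable m n := LocallySolvable.of_mul_sq hs hr ⟨hR, hQp⟩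
  exact (TernarySolvable.mul_sq_iff hs hr).mpr
    (TernarySolvable.of_locallySolvable_of_squarefree hm hn hloc)
end

section
/- A unit u of the 2-adic integers ℤ_[2] is a square in ℚ_[2] if and only if u ≡ 1 (mod 8), i.e., u − 1 ∈ 8·ℤ_[2]. -/
/-!
A square root in `ℚ_[2]` of a unit of `ℤ_[2]` has norm one, so it is itself a unit of `ℤ_[2]`,
and every unit of `ZMod 8` squares to `1`. Conversely, if `8 ∣ u - 1` then
`‖u - 1²‖ ≤ 1/8 < ‖2 · 1‖² = 1/4`, so Hensel's lemma lifts the root `1` of `X² - u` modulo `8`.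
-/

open Polynomial

theorem ZMod.sq_eq_one_of_isUnit_eight : ∀ x : ZMod 8, IsUnit x → x ^ 2 = 1 := by
  decide

namespace PadicInt

variable {p : ℕ} [Fact p.Prime]

theorem isSquare_of_isSquare_coe {x : ℤ_[p]} (h : IsSquare (x : ℚ_[p])) : IsSquare x := by
  obtain ⟨t, ht⟩ := h
  have ht_norm : ‖t‖ ≤ 1 := by
    have : ‖t‖ * ‖t‖ ≤ 1 := by rw [← norm_mul, ← ht]; exact x.norm_le_one
    nlinarith [norm_nonneg t]
  exact ⟨⟨t, ht_norm⟩, Subtype.ext ht⟩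

theorem isSquare_of_norm_sub_sq_lt {x a : ℤ_[p]} (h : ‖x - a ^ 2‖ < ‖2 * a‖ ^ 2) :
    IsSquare x := by
  have hderiv : (X ^ 2 - C x).derivative.aeval a = 2 * a := by
    simp only [derivative_sub, derivative_X_pow, derivative_C, sub_zero, map_mul, map_natCast]
    norm_num
  have hnorm : ‖(X ^ 2 - C x).aeval a‖ < ‖(X ^ 2 - C x).derivative.aeval a‖ ^ 2 := by
    rw [hderiv]; simpa [norm_sub_rev] using h
  obtain ⟨z, hz, -⟩ := hensels_lemma hnorm
  refine ⟨z, ?_⟩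
  simpa [sub_eq_zero, sq, eq_comm] using hz

theorem eight_dvd_sq_sub_one_of_isUnit {x : ℤ_[2]} (hx : IsUnit x) : 8 ∣ x ^ 2 - 1 := by
  have hker : x ^ 2 - 1 ∈ RingHom.ker (toZModPow 3 : ℤ_[2] →+* ZMod (2 ^ 3)) := by
    rw [RingHom.mem_ker, map_sub, map_pow, map_one,
      ZMod.sq_eq_one_of_isUnit_eight _ (hx.map _), sub_self]
  rw [ker_toZModPow, Ideal.mem_span_singleton] at hker
  norm_num at hker
  exact hker

theorem isSquare_of_eight_dvd_sub_one {x : ℤ_[2]} (h : 8 ∣ x - 1) : IsSquare x := by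
  refine isSquare_of_norm_sub_sq_lt (a := 1) ?_
  obtain ⟨v, hv⟩ := h
  have h2 : ‖(2 : ℤ_[2])‖ = 2⁻¹ := by simpa using norm_p (p := 2)
  have h8 : ‖(8 : ℤ_[2])‖ = 2⁻¹ ^ 3 := by
    rw [← h2, ← norm_pow]; norm_num
  calc ‖x - 1 ^ 2‖ = ‖(8 : ℤ_[2])‖ * ‖v‖ := by rw [one_pow, hv, norm_mul]
    _ ≤ 2⁻¹ ^ 3 := by rw [h8]; exact mul_le_of_le_one_right (by positivity) v.norm_le_one
    _ < ‖2 * (1 : ℤ_[2])‖ ^ 2 := by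
      rw [mul_one, h2]
      norm_num

end PadicInt

/-- A unit of `ℤ_[2]` is a square in `ℚ_[2]` iff it is congruent to `1` mod `8`. -/
theorem padicInt_two_unit_isSquare_iff (u : ℤ_[2]ˣ) :
    IsSquare (((u : ℤ_[2]) : ℚ_[2])) ↔ ∃ v : ℤ_[2], (u : ℤ_[2]) - 1 = 8 * v := by
  constructor
  · intro h
    obtain ⟨w, hw⟩ := PadicInt.isSquare_of_isSquare_coe h
    have hw_unit : IsUnit w := isUnit_of_mul_isUnit_left (hw ▸ u.isUnit)
    have h8 := PadicInt.eight_dvd_sq_sub_one_of_isUnit hw_unit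
    rwa [sq, ← hw] at h8
  · intro h
    exact (PadicInt.isSquare_of_eight_dvd_sub_one h).map PadicInt.Coe.ringHom
end

section
/- If x, y, z ∈ ℚ_[2] satisfy z² = 2·x² + 5·y², then x = y = z = 0. -/
/-!
Modulo 8 every odd square is 1, and a check of residues shows that `z² ≡ 2x² + 5y² (mod 8)` forces
`x`, `y`, `z` to be even. Dividing a nontrivial solution over `ℚ_[2]` by its coordinate of largest
norm gives a solution in `ℤ_[2]` with a coordinate of norm 1, which is impossible.
-/

theorem ZMod.not_isUnit_of_sq_eq_two_mul_sq_add_five_mul_sq :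
    ∀ x y z : ZMod 8, z ^ 2 = 2 * x ^ 2 + 5 * y ^ 2 → ¬IsUnit x ∧ ¬IsUnit y ∧ ¬IsUnit z := by
  decide

theorem PadicInt.norm_lt_one_of_sq_eq_two_mul_sq_add_five_mul_sq {x y z : ℤ_[2]}
    (h : z ^ 2 = 2 * x ^ 2 + 5 * y ^ 2) : ‖x‖ < 1 ∧ ‖y‖ < 1 ∧ ‖z‖ < 1 := by
  have h8 := congrArg (PadicInt.toZModPow 3) h
  simp only [map_add, map_mul, map_pow, map_ofNat] at h8
  obtain ⟨hx, hy, hz⟩ := ZMod.not_isUnit_of_sq_eq_two_mul_sq_add_five_mul_sq _ _ _ h8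
  simp only [← PadicInt.not_isUnit_iff]
  exact ⟨mt (IsUnit.map _) hx, mt (IsUnit.map _) hy, mt (IsUnit.map _) hz⟩

theorem Padic.norm_lt_one_of_sq_eq_two_mul_sq_add_five_mul_sq {x y z : ℚ_[2]}
    (hx : ‖x‖ ≤ 1) (hy : ‖y‖ ≤ 1) (hz : ‖z‖ ≤ 1) (h : z ^ 2 = 2 * x ^ 2 + 5 * y ^ 2) :
    ‖x‖ < 1 ∧ ‖y‖ < 1 ∧ ‖z‖ < 1 :=
  PadicInt.norm_lt_one_of_sq_eq_two_mul_sq_add_five_mul_sq (x := ⟨x, hx⟩) (y := ⟨y, hy⟩)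
    (z := ⟨z, hz⟩) (Subtype.ext (by push_cast; exact h))

/-- The form `z² = 2x² + 5y²` has only the trivial solution over `ℚ_[2]`,
i.e. the Hilbert symbol `(2,5)₂ = -1`. -/
theorem padic_two_hilbert_two_five (x y z : ℚ_[2])
    (h : z ^ 2 = 2 * x ^ 2 + 5 * y ^ 2) : x = 0 ∧ y = 0 ∧ z = 0 := by
  set m := max (max ‖x‖ ‖y‖) ‖z‖
  have hxm : ‖x‖ ≤ m := le_max_of_le_left (le_max_left _ _)
  have hym : ‖y‖ ≤ m := le_max_of_le_left (le_max_right _ _)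
  have hzm : ‖z‖ ≤ m := le_max_right _ _
  obtain ⟨u, hu⟩ : ∃ u : ℚ_[2], ‖u‖ = m := by
    rcases max_choice (max ‖x‖ ‖y‖) ‖z‖ with hmax | hmax
    · rcases max_choice ‖x‖ ‖y‖ with hmax' | hmax'
      · exact ⟨x, (hmax.trans hmax').symm⟩
      · exact ⟨y, (hmax.trans hmax').symm⟩
    · exact ⟨z, hmax.symm⟩
  rcases (hu ▸ norm_nonneg u : 0 ≤ m).eq_or_lt with hm0 | hm0
  · simp only [← norm_le_zero_iff, hm0]
    exact ⟨hxm, hym, hzm⟩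
  have hu0 : u ≠ 0 := norm_pos_iff.1 (hu ▸ hm0)
  have hsmall := Padic.norm_lt_one_of_sq_eq_two_mul_sq_add_five_mul_sq (x := x / u) (y := y / u)
    (z := z / u) (by rwa [norm_div, hu, div_le_one hm0]) (by rwa [norm_div, hu, div_le_one hm0])
    (by rwa [norm_div, hu, div_le_one hm0]) (by field_simp; linear_combination h)
  simp only [norm_div, hu, div_lt_one hm0] at hsmall
  exact (lt_irrefl m (max_lt (max_lt hsmall.1 hsmall.2.1) hsmall.2.2)).elim
end
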